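/- Let Σ = (X, 𝒰, φ) be a control system monotone with respect to states and inputs. Assume (i) there exists ρ ∈ K∞ such that x₋ ≤ x ≤ x₊ implies ‖x‖_X ≤ ρ(‖x₋‖_X + ‖x₊‖_X); (ii) there exist η, ξ ∈ K∞ such that for every x ∈ X, u ∈ 𝒰(x), and ε > 0 there exist x₋, x₊ ∈ X and u₋ ∈ 𝒰(x₋) ∩ 𝒰_c, u₊ ∈ 𝒰(x₊) ∩ 𝒰_c with x₋ ≤ x ≤ x₊, u₋ ≤ u ≤ u₊, max(‖u₋‖, ‖u₊‖) ≤ η(‖u‖ + ε), and max(‖x₋‖, ‖x₊‖) ≤ ξ(‖x‖ + ‖u‖ + ε). Then Σ is ISS if and only if Σ is ISS with respect to inputs in 𝒰_c. -/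

import Mathlib

/-- Class `K`: continuous, strictly increasing, zero at zero. -/
def ClassK (γ : NNReal → NNReal) : Prop :=
  Continuous γ ∧ StrictMono γ ∧ γ 0 = 0

/-- Class `K∞`: class `K` and unbounded. -/
def ClassKInf (γ : NNReal → NNReal) : Prop :=
  ClassK γ ∧ ∀ M : NNReal, ∃ r : NNReal, M < γ r

/-- Class `KL`. -/
def ClassKL (β : NNReal → NNReal → NNReal) : Prop :=
  (∀ t : NNReal, ClassK (fun r => β r t)) ∧
    ∀ r : NNReal, 0 < r →
      Antitone (fun t => β r t) ∧
        Filter.Tendsto (fun t => β r t) Filter.atTop (nhds 0)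

/-- ISS w.r.t. the class of inputs `S`, for a system with admissible input sets `adm x`. -/
def ISSAdmOn {X U : Type*} [NormedAddCommGroup X] [NormedAddCommGroup U]
    (φ : NNReal → X → U → X) (adm : X → Set U) (S : Set U) : Prop :=
  ∃ β γ, ClassKL β ∧ ClassK γ ∧
    ∀ (x : X), ∀ u ∈ adm x ∩ S, ∀ t : NNReal, ‖φ t x u‖₊ ≤ β ‖x‖₊ t + γ ‖u‖₊

/-!
Take an ISS gain pair `(β, γ)` for inputs in `Uc`. Given `x` and `u`, sandwich them as
`xm ≤ x ≤ xp`, `um ≤ u ≤ up` with `um, up ∈ Uc`. Monotonicity sandwiches `φ t x u` between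
`φ t xm um` and `φ t xp up`, whose norms obey the `Uc`-estimate, so assumption (i) bounds
`‖φ t x u‖` by `ρ (2 β (ξ (‖x‖ + ‖u‖ + ε)) t + 2 γ (η (‖u‖ + ε)))`. Let `ε → 0`, then
split this mixed bound into a `KL` term in `‖x‖` and a `K` term in `‖u‖` using
`f (a + b) ≤ f (2a) + f (2b)` for monotone `f`.
-/

lemma Monotone.apply_add_le {f : NNReal → NNReal} (hf : Monotone f) (a b : NNReal) :
    f (a + b) ≤ f (2 * a) + f (2 * b) := by
  rcases le_total a b with h | h
  · calc f (a + b) ≤ f (2 * b) := hf (by rw [two_mul]; exact add_le_add_left h b)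
      _ ≤ f (2 * a) + f (2 * b) := le_add_self
  · calc f (a + b) ≤ f (2 * a) := hf (by rw [two_mul]; exact add_le_add_right h a)
      _ ≤ f (2 * a) + f (2 * b) := le_self_add

lemma le_apply_zero_of_forall_pos_le {α : Type*} [TopologicalSpace α] [Preorder α]
    [ClosedIciTopology α] {f : NNReal → α} {a : α} (hf : ContinuousAt f 0)
    (h : ∀ ε, 0 < ε → a ≤ f ε) : a ≤ f 0 :=
  ge_of_tendsto (hf.tendsto.mono_left nhdsWithin_le_nhds)
    (eventually_nhdsWithin_of_forall (s := Set.Ioi 0) h)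

namespace ClassK

variable {f g : NNReal → NNReal}

lemma monotone (hf : ClassK f) : Monotone f :=
  hf.2.1.monotone

lemma comp (hf : ClassK f) (hg : ClassK g) : ClassK (fun r => f (g r)) :=
  ⟨hf.1.comp hg.1, hf.2.1.comp hg.2.1, by simp only [hg.2.2, hf.2.2]⟩

lemma add (hf : ClassK f) (hg : ClassK g) : ClassK (fun r => f r + g r) :=
  ⟨hf.1.add hg.1, hf.2.1.add hg.2.1, by simp only [hf.2.2, hg.2.2, add_zero]⟩

lemma const_mul {c : NNReal} (hc : 0 < c) : ClassK (fun r => c * r) :=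
  ⟨continuous_const.mul continuous_id, fun _ _ h => mul_lt_mul_of_pos_left h hc, mul_zero c⟩

lemma const_mul_comp {c : NNReal} (hc : 0 < c) (hf : ClassK f) : ClassK (fun r => c * f r) :=
  (const_mul hc).comp hf

end ClassK

namespace ClassKL

variable {β : NNReal → NNReal → NNReal}

lemma classK (hβ : ClassKL β) (t : NNReal) : ClassK (fun r => β r t) :=
  hβ.1 t

lemma antitone (hβ : ClassKL β) (r : NNReal) : Antitone (fun t => β r t) := by
  rcases (zero_le : 0 ≤ r).eq_or_lt with rfl | hr
  · intro t₁ t₂ _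
    simp only [(hβ.classK t₁).2.2, (hβ.classK t₂).2.2, le_refl]
  · exact (hβ.2 r hr).1

lemma comp {σ κ : NNReal → NNReal} (hσ : ClassK σ) (hβ : ClassKL β) (hκ : ClassK κ) :
    ClassKL (fun r t => σ (β (κ r) t)) := by
  refine ⟨fun t => hσ.comp ((hβ.classK t).comp hκ), fun r hr => ?_⟩
  have hκr : 0 < κ r := hκ.2.2 ▸ hκ.2.1 hr
  refine ⟨hσ.monotone.comp_antitone (hβ.antitone (κ r)), ?_⟩
  simpa only [hσ.2.2, Function.comp_def] using (hσ.1.tendsto 0).comp (hβ.2 (κ r) hκr).2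

lemma exists_split_bound {ρ γ : NNReal → NNReal} (hρ : ClassK ρ) (hβ : ClassKL β)
    (hγ : ClassK γ) :
    ∃ β' γ', ClassKL β' ∧ ClassK γ' ∧
      ∀ r s t, ρ (β (r + s) t + γ s) ≤ β' r t + γ' s := by
  have h2 : (0 : NNReal) < 2 := two_pos
  have h4 : (0 : NNReal) < 4 := by norm_num
  refine ⟨fun r t => ρ (4 * β (2 * r) t), fun s => ρ (4 * β (2 * s) 0) + ρ (2 * γ s),
    ClassKL.comp (hρ.comp (ClassK.const_mul h4)) hβ (ClassK.const_mul h2),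
    ((hρ.comp (ClassK.const_mul h4)).comp ((hβ.classK 0).comp (ClassK.const_mul h2))).add
      (hρ.comp (ClassK.const_mul_comp h2 hγ)), fun r s t => ?_⟩
  have hβ_add : β (r + s) t ≤ β (2 * r) t + β (2 * s) t :=
    (hβ.classK t).monotone.apply_add_le r s
  calc ρ (β (r + s) t + γ s) ≤ ρ (2 * β (r + s) t) + ρ (2 * γ s) := hρ.monotone.apply_add_le _ _
    _ ≤ ρ (2 * (2 * β (2 * r) t)) + ρ (2 * (2 * β (2 * s) t)) + ρ (2 * γ s) := by
        gcongr
        exact (hρ.monotone (by rw [← mul_add]; gcongr)).trans (hρ.monotone.apply_add_le _ _)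
    _ ≤ ρ (4 * β (2 * r) t) + (ρ (4 * β (2 * s) 0) + ρ (2 * γ s)) := by
        simp only [← mul_assoc, show (2 : NNReal) * 2 = 4 by norm_num, add_assoc]
        gcongr
        exact hρ.monotone (by gcongr; exact hβ.antitone _ (zero_le : 0 ≤ t))

end ClassKL

section ControlSystem

variable {X U : Type*} [NormedAddCommGroup X] [NormedAddCommGroup U]

lemma ISSAdmOn.mono {φ : NNReal → X → U → X} {adm : X → Set U} {S T : Set U}
    (h : ISSAdmOn φ adm S) (hTS : T ⊆ S) : ISSAdmOn φ adm T := by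
  obtain ⟨β, γ, hβ, hγ, hest⟩ := h
  exact ⟨β, γ, hβ, hγ, fun x u hu => hest x u ⟨hu.1, hTS hu.2⟩⟩

variable [Preorder X] [Preorder U]

lemma nnnorm_le_of_sandwich {φ : NNReal → X → U → X} {adm : X → Set U} {Uc : Set U}
    (hmono : ∀ (t : NNReal) (x₁ x₂ : X) (u₁ u₂ : U), u₁ ∈ adm x₁ → u₂ ∈ adm x₂ →
      x₁ ≤ x₂ → u₁ ≤ u₂ → φ t x₁ u₁ ≤ φ t x₂ u₂)
    {ρ : NNReal → NNReal} (hρ : Monotone ρ)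
    (hsandwich : ∀ xm x xp : X, xm ≤ x → x ≤ xp → ‖x‖₊ ≤ ρ (‖xm‖₊ + ‖xp‖₊))
    {η ξ : NNReal → NNReal}
    (happrox : ∀ (x : X), ∀ u ∈ adm x, ∀ ε : NNReal, 0 < ε →
      ∃ (xm xp : X) (um up : U), um ∈ adm xm ∩ Uc ∧ up ∈ adm xp ∩ Uc ∧
        xm ≤ x ∧ x ≤ xp ∧ um ≤ u ∧ u ≤ up ∧
        max ‖um‖₊ ‖up‖₊ ≤ η (‖u‖₊ + ε) ∧
        max ‖xm‖₊ ‖xp‖₊ ≤ ξ (‖x‖₊ + ‖u‖₊ + ε))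
    {β : NNReal → NNReal → NNReal} {γ : NNReal → NNReal}
    (hβ : ∀ t, Monotone fun r => β r t) (hγ : Monotone γ)
    (hest : ∀ (x : X), ∀ u ∈ adm x ∩ Uc, ∀ t : NNReal, ‖φ t x u‖₊ ≤ β ‖x‖₊ t + γ ‖u‖₊)
    {x : X} {u : U} (hu : u ∈ adm x) {ε : NNReal} (hε : 0 < ε) (t : NNReal) :
    ‖φ t x u‖₊ ≤ ρ (2 * β (ξ (‖x‖₊ + ‖u‖₊ + ε)) t + 2 * γ (η (‖u‖₊ + ε))) := by
  obtain ⟨xm, xp, um, up, hum, hup, hxm, hxp, hum_le, hup_ge, hu_bound, hx_bound⟩ :=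
    happrox x u hu ε hε
  set b := β (ξ (‖x‖₊ + ‖u‖₊ + ε)) t + γ (η (‖u‖₊ + ε))
  have hm : ‖φ t xm um‖₊ ≤ b := (hest xm um hum t).trans <|
    add_le_add (hβ t ((le_max_left _ _).trans hx_bound)) (hγ ((le_max_left _ _).trans hu_bound))
  have hp : ‖φ t xp up‖₊ ≤ b := (hest xp up hup t).trans <|
    add_le_add (hβ t ((le_max_right _ _).trans hx_bound)) (hγ ((le_max_right _ _).trans hu_bound))
  calc ‖φ t x u‖₊ ≤ ρ (‖φ t xm um‖₊ + ‖φ t xp up‖₊) :=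
        hsandwich _ _ _ (hmono t xm x um u hum.1 hu hxm hum_le)
          (hmono t x xp u up hu hup.1 hxp hup_ge)
    _ ≤ ρ (b + b) := hρ (add_le_add hm hp)
    _ = ρ (2 * β (ξ (‖x‖₊ + ‖u‖₊ + ε)) t + 2 * γ (η (‖u‖₊ + ε))) := by
        rw [← two_mul, mul_add]

end ControlSystem

/-- A control system monotone w.r.t. both states and inputs is ISS iff it is ISS with
respect to a subclass of inputs `Uc` satisfying the sandwich conditions. -/
theorem stmt_6 {X U : Type*} [NormedAddCommGroup X] [Preorder X]
    [NormedAddCommGroup U] [Preorder U]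
    (φ : NNReal → X → U → X) (adm : X → Set U) (Uc : Set U)
    (hmono : ∀ (t : NNReal) (x₁ x₂ : X) (u₁ u₂ : U), u₁ ∈ adm x₁ → u₂ ∈ adm x₂ →
      x₁ ≤ x₂ → u₁ ≤ u₂ → φ t x₁ u₁ ≤ φ t x₂ u₂)
    (ρ : NNReal → NNReal) (hρ : ClassKInf ρ)
    (hsandwich : ∀ xm x xp : X, xm ≤ x → x ≤ xp → ‖x‖₊ ≤ ρ (‖xm‖₊ + ‖xp‖₊))
    (η ξ : NNReal → NNReal) (hη : ClassKInf η) (hξ : ClassKInf ξ)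
    (happrox : ∀ (x : X), ∀ u ∈ adm x, ∀ ε : NNReal, 0 < ε →
      ∃ (xm xp : X) (um up : U), um ∈ adm xm ∩ Uc ∧ up ∈ adm xp ∩ Uc ∧
        xm ≤ x ∧ x ≤ xp ∧ um ≤ u ∧ u ≤ up ∧
        max ‖um‖₊ ‖up‖₊ ≤ η (‖u‖₊ + ε) ∧
        max ‖xm‖₊ ‖xp‖₊ ≤ ξ (‖x‖₊ + ‖u‖₊ + ε)) :
    ISSAdmOn φ adm (Set.univ : Set U) ↔ ISSAdmOn φ adm Uc := by
  refine ⟨fun h => h.mono (Set.subset_univ Uc), ?_⟩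
  rintro ⟨β, γ, hβ, hγ, hest⟩
  obtain ⟨β', γ', hβ', hγ', hsplit⟩ := ClassKL.exists_split_bound hρ.1
    (ClassKL.comp (ClassK.const_mul two_pos) hβ hξ.1) (ClassK.const_mul_comp two_pos (hγ.comp hη.1))
  refine ⟨β', γ', hβ', hγ', ?_⟩
  rintro x u ⟨hu, -⟩ t
  have hcont : Continuous fun ε => ρ (2 * β (ξ (‖x‖₊ + ‖u‖₊ + ε)) t + 2 * γ (η (‖u‖₊ + ε))) := by
    have := hρ.1.1
    have := (hβ.classK t).1
    have := hξ.1.1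
    have := hγ.1
    have := hη.1.1
    fun_prop
  calc ‖φ t x u‖₊ ≤ ρ (2 * β (ξ (‖x‖₊ + ‖u‖₊ + 0)) t + 2 * γ (η (‖u‖₊ + 0))) :=
        le_apply_zero_of_forall_pos_le hcont.continuousAt fun ε hε =>
          nnnorm_le_of_sandwich hmono hρ.1.monotone hsandwich happrox
            (fun t => (hβ.classK t).monotone) hγ.monotone hest hu hε t
    _ ≤ β' ‖x‖₊ t + γ' ‖u‖₊ := by simpa only [add_zero] using hsplit ‖x‖₊ ‖u‖₊ t
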